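/- arXiv:1609.08311 — 2 statements merged into one kernel-verified Lean document; each statement's English description precedes it below -/
import Mathlib

section
/- Let G be a finite group and let K and L be distinct sol-components of G. Then K and L normalize each other and [K, L] ≤ sol(G), i.e., K and L commute modulo sol(G). -/
/-- A subgroup is subnormal if it is a term of a finite chain of subgroups,
each normal in the next, ending at the whole group. -/
def Subgroup.IsSubnormalIn {G : Type*} [Group G] (H : Subgroup G) : Prop :=
  ∃ (n : ℕ) (c : Fin (n + 1) → Subgroup G),
    c 0 = H ∧ c (Fin.last n) = ⊤ ∧
    ∀ i : Fin n, c i.castSucc ≤ c i.succ ∧ ((c i.castSucc).subgroupOf (c i.succ)).Normal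

/-- A group is quasisimple if it is perfect and its quotient by its center is simple. -/
def IsQuasisimple (H : Type*) [Group H] : Prop :=
  (⁅(⊤ : Subgroup H), (⊤ : Subgroup H)⁆ = ⊤) ∧ IsSimpleGroup (H ⧸ Subgroup.center H)

/-- A component of a group is a quasisimple subnormal subgroup. -/
def Subgroup.IsComponent {G : Type*} [Group G] (K : Subgroup G) : Prop :=
  K.IsSubnormalIn ∧ IsQuasisimple K

/-- `sol G` : the subgroup generated by all normal solvable subgroups of `G`;
for finite `G` this is the largest normal solvable subgroup. -/
def sol (G : Type*) [Group G] : Subgroup G :=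
  Subgroup.closure {x : G | ∃ N : Subgroup G, N.Normal ∧ IsSolvable N ∧ x ∈ N}

instance sol_normal (G : Type*) [Group G] : (sol G).Normal := by
  constructor
  intro n hn g
  induction hn using Subgroup.closure_induction with
  | mem x hx =>
      obtain ⟨N, hN, hNs, hxN⟩ := hx
      exact Subgroup.subset_closure ⟨N, hN, hNs, hN.conj_mem x hxN g⟩
  | one => simpa using (sol G).one_mem
  | mul x y _ _ hx hy =>
      have : g * (x * y) * g⁻¹ = (g * x * g⁻¹) * (g * y * g⁻¹) := by group
      rw [this]; exact (sol G).mul_mem hx hy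
  | inv x _ hx =>
      have : g * x⁻¹ * g⁻¹ = (g * x * g⁻¹)⁻¹ := by group
      rw [this]; exact (sol G).inv_mem hx

/-- A sol-component of `G`: a perfect subnormal subgroup whose image in `G/sol(G)`
is a component of `G/sol(G)`. -/
def Subgroup.IsSolComponent {G : Type*} [Group G] (K : Subgroup G) : Prop :=
  ⁅K, K⁆ = K ∧ K.IsSubnormalIn ∧
    (K.map (QuotientGroup.mk' (sol G))).IsComponent

/-- The subgroup generated by the sol-components. -/
def layerSol (G : Type*) [Group G] : Subgroup G :=
  Subgroup.closure {x : G | ∃ K : Subgroup G, K.IsSolComponent ∧ x ∈ K}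

/-- `O*(G) = sol(G) · layerSol(G)`. -/
def Ostar (G : Type*) [Group G] : Subgroup G := sol G ⊔ layerSol G

/-- The Fitting subgroup: the subgroup generated by all nilpotent normal subgroups. -/
def fitting (G : Type*) [Group G] : Subgroup G :=
  Subgroup.closure {x : G | ∃ N : Subgroup G, N.Normal ∧ Group.IsNilpotent N ∧ x ∈ N}

/-- The layer `E(G)`: the subgroup generated by all components. -/
def layer (G : Type*) [Group G] : Subgroup G :=
  Subgroup.closure {x : G | ∃ K : Subgroup G, K.IsComponent ∧ x ∈ K}

/-- The generalized Fitting subgroup `F*(G) = F(G)E(G)`. -/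
def Fstar (G : Type*) [Group G] : Subgroup G := fitting G ⊔ layer G

/-- `O_p(G)` : the subgroup generated by all normal `p`-subgroups of `G`. -/
def pCore (p : ℕ) (G : Type*) [Group G] : Subgroup G :=
  Subgroup.closure {x : G | ∃ N : Subgroup G, N.Normal ∧ IsPGroup p N ∧ x ∈ N}

/-
A perfect subnormal subgroup `K` is determined by `K ⊔ S` for any solvable normal subgroup `S`.
Descending the derived series of `S` reduces this to `S` abelian. Then, climbing a subnormal series
`K ⊴ H₁ ⊴ H₂ ⊴ ⋯` from `K`, the abelian quotient `Hᵢ / K` gives `K = ⁅Hᵢ, Hᵢ⁆`, which is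
normalized by `Hᵢ₊₁`; at the top, `K = ⁅G, G⁆` whenever `K ⊔ S = G`.
Hence distinct sol-components have distinct images modulo `sol G`; these are components, and
distinct components commute (three subgroups lemma, induction on `|G|`). So `⁅K, L⁆ ≤ sol G`, and
for `k ∈ K` the conjugate of `L` by `k` is perfect and subnormal with the same image as `L` modulo
`sol G`, hence equal to `L`.
-/

namespace Subgroup

variable {G : Type*} [Group G]

theorem IsSubnormalIn.isSubnormal {H : Subgroup G} (h : H.IsSubnormalIn) : H.IsSubnormal := by
  obtain ⟨n, c, rfl, hlast, hstep⟩ := h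
  refine Fin.reverseInduction (motive := fun i => (c i).IsSubnormal) (hlast ▸ .top) ?_ 0
  exact fun i ih => .step _ _ (hstep i).1 ih (hstep i).2

theorem normalizer_le_normalizer_commutator (H : Subgroup G) :
    normalizer (H : Set G) ≤ normalizer ((⁅H, H⁆ : Subgroup G) : Set G) := fun g hg => by
  rw [mem_normalizer_iff_map_conj_eq] at hg ⊢
  rw [map_commutator, hg]

theorem commutator_subgroupOf (A B Y : Subgroup G) :
    ⁅A.subgroupOf Y, B.subgroupOf Y⁆ = ⁅A ⊓ Y, B ⊓ Y⁆.subgroupOf Y := by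
  apply map_injective Y.subtype_injective
  rw [map_commutator, subgroupOf_map_subtype, subgroupOf_map_subtype, subgroupOf_map_subtype,
    inf_of_le_left ((commutator_le_sup _ _).trans (sup_le inf_le_right inf_le_right))]

theorem commutator_subgroupOf_eq_bot {A : Subgroup G} (hA : ⁅A, A⁆ = ⊥) (Y : Subgroup G) :
    ⁅A.subgroupOf Y, A.subgroupOf Y⁆ = ⊥ := by
  have hAY : ⁅A ⊓ Y, A ⊓ Y⁆ = ⊥ := le_bot_iff.1 (hA ▸ commutator_mono inf_le_left inf_le_left)
  rw [commutator_subgroupOf, hAY, bot_subgroupOf]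

open scoped Pointwise in
theorem eq_commutator_of_le_sup {K H A : Subgroup G} [A.Normal] (hA : ⁅A, A⁆ = ⊥)
    (hKp : ⁅K, K⁆ = K) (hKH : K ≤ H) (hK : (K.subgroupOf H).Normal) (hH : H ≤ K ⊔ A) :
    K = ⁅H, H⁆ := by
  refine le_antisymm (hKp ▸ commutator_mono hKH hKH) ?_
  have hsup : K.subgroupOf H ⊔ A.subgroupOf H = ⊤ := by
    rw [eq_top_iff]
    rintro ⟨h, hh⟩ -
    have hKA : h ∈ (K : Set G) * (A : Set G) := by rw [← mul_normal]; exact hH hh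
    obtain ⟨k, hk, a, ha, rfl⟩ := hKA
    have haH : a ∈ H := by simpa using H.mul_mem (H.inv_mem (hKH hk)) hh
    exact mul_mem (mem_sup_left (show (⟨k, hKH hk⟩ : H) ∈ K.subgroupOf H from hk))
      (mem_sup_right (show (⟨a, haH⟩ : H) ∈ A.subgroupOf H from ha))
  have hcomm : IsMulCommutative (A.subgroupOf H) :=
    commutator_self_eq_bot_iff.1 (commutator_subgroupOf_eq_bot hA H)
  have hle : _root_.commutator H ≤ K.subgroupOf H :=
    hK.commutator_le_of_self_sup_commutative_eq_top hsup hcomm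
  rw [← map_subtype_commutator]
  exact map_le_iff_le_comap.2 hle

theorem IsSubnormal.eq_commutator_of_sup_eq_top {K A : Subgroup G} [A.Normal]
    (hA : ⁅A, A⁆ = ⊥) (hKp : ⁅K, K⁆ = K) (hK : K.IsSubnormal) (hKA : K ⊔ A = ⊤) :
    K = _root_.commutator G := by
  suffices ∀ H : Subgroup G, H.IsSubnormal → K ≤ H → (K.subgroupOf H).Normal →
      K = _root_.commutator G from this K hK le_rfl (by rw [subgroupOf_self]; infer_instance)
  intro H hH
  induction hH with
  | top => exact fun hKH hKn => eq_commutator_of_le_sup hA hKp hKH hKn (le_top.trans hKA.ge)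
  | step H H' hHH' _ hHn ih =>
    intro hKH hKn
    have hK : K = ⁅H, H⁆ := eq_commutator_of_le_sup hA hKp hKH hKn (le_top.trans hKA.ge)
    refine ih (hKH.trans hHH') (normal_subgroupOf_of_le_normalizer ?_)
    rw [hK]
    exact ((normal_subgroupOf_iff_le_normalizer hHH').1 hHn).trans
      (normalizer_le_normalizer_commutator H)

theorem eq_of_sup_eq_sup_of_commutator_eq_bot {K L A : Subgroup G} [A.Normal]
    (hA : ⁅A, A⁆ = ⊥) (hKp : ⁅K, K⁆ = K) (hK : K.IsSubnormal) (hLp : ⁅L, L⁆ = L)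
    (hL : L.IsSubnormal) (h : K ⊔ A = L ⊔ A) : K = L := by
  set Y := K ⊔ A
  have key : ∀ M : Subgroup G, ⁅M, M⁆ = M → M.IsSubnormal → M ⊔ A = Y →
      M.subgroupOf Y = _root_.commutator Y := by
    intro M hMp hM hMY
    have hMY' : M ≤ Y := hMY ▸ le_sup_left
    refine hM.subgroupOf.eq_commutator_of_sup_eq_top (commutator_subgroupOf_eq_bot hA Y) ?_ ?_
    · rw [commutator_subgroupOf, inf_of_le_left hMY', hMp]
    · rw [← subgroupOf_sup hMY' le_sup_right, hMY, subgroupOf_self]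
  have hKL := (key K hKp hK rfl).trans (key L hLp hL h.symm).symm
  rwa [subgroupOf_inj, inf_of_le_left le_sup_left, inf_of_le_left (h ▸ le_sup_left)] at hKL

theorem sup_eq_sup_of_commutator_le {K L A N : Subgroup G} [A.Normal] [N.Normal]
    (hAN : ⁅A, A⁆ ≤ N) (hKp : ⁅K, K⁆ = K) (hK : K.IsSubnormal) (hLp : ⁅L, L⁆ = L)
    (hL : L.IsSubnormal) (h : K ⊔ A = L ⊔ A) : K ⊔ N = L ⊔ N := by
  set q := QuotientGroup.mk' N
  have hq := QuotientGroup.mk'_surjective N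
  have hKL : K.map q = L.map q := by
    refine eq_of_sup_eq_sup_of_commutator_eq_bot (A := A.map q) ?_ ?_ (hK.map hq) ?_ (hL.map hq) ?_
    · rwa [← map_commutator, map_eq_bot_iff, QuotientGroup.ker_mk']
    · rw [← map_commutator, hKp]
    · rw [← map_commutator, hLp]
    · rw [← map_sup, h, map_sup]
  simpa [comap_map_eq, q] using congrArg (comap q) hKL

theorem eq_of_sup_eq_sup_of_isSolvable {K L S : Subgroup G} [S.Normal] (hS : Group.IsSolvable S)
    (hKp : ⁅K, K⁆ = K) (hK : K.IsSubnormal) (hLp : ⁅L, L⁆ = L) (hL : L.IsSubnormal)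
    (h : K ⊔ S = L ⊔ S) : K = L := by
  obtain ⟨n, hn⟩ := hS.solvable
  set D : ℕ → Subgroup G := fun i => (derivedSeries S i).map S.subtype
  have hD0 : D 0 = S := by
    simp only [D, derivedSeries_zero, ← MonoidHom.range_eq_map, range_subtype]
  have hD : ∀ i, D (i + 1) = ⁅D i, D i⁆ := fun i => by
    simp only [D, derivedSeries_succ, map_commutator]
  have hDn : ∀ i, (D i).Normal := by
    intro i
    induction i with
    | zero => rwa [hD0]
    | succ i ih => rw [hD]; infer_instance
  have hKL : ∀ i, K ⊔ D i = L ⊔ D i := by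
    intro i
    induction i with
    | zero => rwa [hD0]
    | succ i ih =>
      have := hDn i
      have := hDn (i + 1)
      exact sup_eq_sup_of_commutator_le (hD i).ge hKp hK hLp hL ih
  simpa [D, hn] using hKL n

theorem isSolvable_sup_of_normal {M N : Subgroup G} [N.Normal] [Group.IsSolvable M]
    [Group.IsSolvable N] : Group.IsSolvable ↥(M ⊔ N) := by
  rw [Group.isSolvable_iff_subgroup_quotient (N.subgroupOf (M ⊔ N))]
  exact ⟨Group.isSolvable_of_surjective (f := (subgroupOfEquivOfLe le_sup_right).symm.toMonoidHom)
      (MulEquiv.surjective _),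
    Group.isSolvable_of_surjective
      (f := (QuotientGroup.quotientInfEquivProdNormalQuotient M N).toMonoidHom)
      (MulEquiv.surjective _)⟩

end Subgroup

open Subgroup

theorem isSolvable_sol (G : Type*) [Group G] [Finite G] : Group.IsSolvable (sol G) := by
  obtain ⟨N, ⟨hN, hNs⟩, hmax⟩ :=
    (Set.toFinite {N : Subgroup G | N.Normal ∧ Group.IsSolvable N}).exists_maximal
      ⟨⊥, normal_bot, inferInstance⟩
  suffices sol G = N by rwa [this]
  refine le_antisymm ((closure_le _).2 ?_) fun x hx => subset_closure ⟨N, hN, hNs, hx⟩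
  rintro x ⟨M, hM, hMs, hx⟩
  have : Group.IsSolvable M := hMs
  exact hmax ⟨inferInstance, isSolvable_sup_of_normal⟩ le_sup_right (mem_sup_left hx)

namespace IsQuasisimple

theorem of_mulEquiv {A B : Type*} [Group A] [Group B] (hA : IsQuasisimple A) (e : A ≃* B) :
    IsQuasisimple B := by
  obtain ⟨hperf, hsimple⟩ := hA
  have hc : (center A).map (e : A →* B) = center B := by
    ext b
    change b ∈ (center A).map e.toMonoidHom ↔ _
    rw [mem_map_equiv, ← SetLike.mem_coe, ← SetLike.mem_coe, coe_center, coe_center]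
    exact MulEquivClass.apply_mem_center_iff e.symm
  have : Group.IsPerfect A := ⟨hperf⟩
  exact ⟨(Group.IsPerfect.ofSurjective (f := e.toMonoidHom) e.surjective).commutator_eq_top,
    (QuotientGroup.congr _ _ e hc).symm.isSimpleGroup⟩

theorem nontrivial {Q : Type*} [Group Q] (hQ : IsQuasisimple Q) : Nontrivial Q :=
  have := hQ.2
  (QuotientGroup.mk'_surjective (center Q)).nontrivial

theorem le_center_of_normal {Q : Type*} [Group Q] (hQ : IsQuasisimple Q) {M : Subgroup Q}
    [M.Normal] (hM : M ≠ ⊤) : M ≤ center Q := by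
  obtain ⟨hperf, hsimple⟩ := hQ
  have hMn : (M.map (QuotientGroup.mk' (center Q))).Normal := inferInstance
  rcases hMn.eq_bot_or_eq_top with h | h
  · rwa [Subgroup.map_eq_bot_iff, QuotientGroup.ker_mk'] at h
  · have hMZ : M ⊔ center Q = ⊤ := by
      simpa [comap_map_eq] using congrArg (comap (QuotientGroup.mk' (center Q))) h
    refine absurd (top_le_iff.1 ?_) hM
    rw [← hperf]
    exact Normal.commutator_le_of_self_sup_commutative_eq_top hMZ inferInstance

theorem commutator_eq_self {G : Type*} [Group G] {K : Subgroup G} (hK : IsQuasisimple K) :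
    ⁅K, K⁆ = K :=
  isPerfect_iff.1 ⟨hK.1⟩

end IsQuasisimple

namespace Subgroup

variable {G : Type*} [Group G]

theorem commutator_eq_bot_of_commutator_commutator_eq_bot {K M : Subgroup G} (hK : ⁅K, K⁆ = K)
    (h : ⁅⁅K, M⁆, K⁆ = ⊥) : ⁅K, M⁆ = ⊥ := by
  have := commutator_commutator_eq_bot_of_rotate h (by rwa [commutator_comm M K])
  rwa [hK] at this

theorem IsSubnormal.commutator_eq_bot_of_not_le [Finite G] {K H : Subgroup G}
    (hK : K.IsSubnormal) (hKq : IsQuasisimple K) (hH : H.IsSubnormal) (hKH : ¬K ≤ H) :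
    ⁅K, H⁆ = ⊥ := by
  induction hn : Nat.card G using Nat.strong_induction_on generalizing G with
  | _ n ih =>
  have restrict : ∀ M : Subgroup G, M ≠ ⊤ → K ≤ M → ∀ H' : Subgroup G, H'.IsSubnormal →
      ¬K ≤ H' → ⁅K, H' ⊓ M⁆ = ⊥ := by
    intro M hM hKM H' hH' hKH'
    have hcard : Nat.card M < n :=
      hn ▸ (card_le_card_group M).lt_of_ne (mt (card_eq_iff_eq_top M).1 hM)
    have := ih _ hcard hK.subgroupOf (hKq.of_mulEquiv (subgroupOfEquivOfLe hKM).symm)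
      hH'.subgroupOf ?_ rfl
    · rw [commutator_subgroupOf, inf_of_le_left hKM, subgroupOf_eq_bot] at this
      exact this.eq_bot_of_le ((commutator_le_sup _ _).trans (sup_le hKM inf_le_right))
    · exact fun h => hKH' fun x hx => h (show (⟨x, hKM hx⟩ : M) ∈ K.subgroupOf M from hx)
  obtain ⟨M, hMn, hHM, hMtop⟩ := hH.exists_normal_and_le_and_lt_top_of_ne fun h => hKH (h ▸ le_top)
  by_cases hKM : K ≤ M
  · simpa [inf_of_le_left hHM] using restrict M hMtop.ne hKM H hH hKH
  suffices ⁅K, M⁆ = ⊥ from le_bot_iff.1 (this ▸ commutator_mono le_rfl hHM)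
  obtain rfl | ⟨M', hM'n, hKM', hM'top⟩ := hK.lt_normal
  · exact commutator_top_left_eq_bot_iff_le_center.2
      ((hKq.of_mulEquiv topEquiv).le_center_of_normal hMtop.ne)
  · have h1 : ⁅K, M ⊓ M'⁆ = ⊥ := restrict M' hM'top.ne hKM' M hMn.isSubnormal hKM
    have h2 : ⁅K, M⁆ ≤ M ⊓ M' :=
      le_inf (commutator_le_right K M)
        ((commutator_mono hKM' le_rfl).trans (commutator_le_left M' M))
    refine commutator_eq_bot_of_commutator_commutator_eq_bot hKq.commutator_eq_self ?_
    rw [eq_bot_iff, ← h1, commutator_comm K (M ⊓ M')]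
    exact commutator_mono h2 le_rfl

theorem IsComponent.commutator_eq_bot [Finite G] {K L : Subgroup G} (hK : K.IsComponent)
    (hL : L.IsComponent) (hKL : K ≠ L) : ⁅K, L⁆ = ⊥ := by
  obtain ⟨hKs, hKq⟩ := hK
  obtain ⟨hLs, hLq⟩ := hL
  have hKne : K ≠ ⊥ := (nontrivial_iff_ne_bot K).1 hKq.nontrivial
  refine hKs.isSubnormal.commutator_eq_bot_of_not_le hKq hLs.isSubnormal
    fun hKL' => hKL (le_antisymm hKL' ?_)
  by_contra hLK
  apply hKne
  rw [← hKq.commutator_eq_self, eq_bot_iff,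
    ← hLs.isSubnormal.commutator_eq_bot_of_not_le hLq hKs.isSubnormal hLK]
  exact commutator_mono hKL' le_rfl

theorem eq_of_map_mk_sol_eq [Finite G] {K L : Subgroup G} (hKp : ⁅K, K⁆ = K)
    (hK : K.IsSubnormal) (hLp : ⁅L, L⁆ = L) (hL : L.IsSubnormal)
    (h : K.map (QuotientGroup.mk' (sol G)) = L.map (QuotientGroup.mk' (sol G))) : K = L := by
  refine eq_of_sup_eq_sup_of_isSolvable (isSolvable_sol G) hKp hK hLp hL ?_
  simpa [comap_map_eq] using congrArg (comap (QuotientGroup.mk' (sol G))) h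

theorem le_normalizer_of_commutator_map_mk_sol_eq_bot [Finite G] {K L : Subgroup G}
    (hLp : ⁅L, L⁆ = L) (hL : L.IsSubnormal)
    (h : ⁅K.map (QuotientGroup.mk' (sol G)), L.map (QuotientGroup.mk' (sol G))⁆ = ⊥) :
    K ≤ normalizer (L : Set G) := by
  set q := QuotientGroup.mk' (sol G)
  intro k hk
  have hkL : q k ∈ normalizer (L.map q : Set (G ⧸ sol G)) :=
    centralizer_le_normalizer _ (commutator_eq_bot_iff_le_centralizer.1 h ⟨k, hk, rfl⟩)
  rw [mem_normalizer_iff_map_conj_eq] at hkL ⊢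
  refine eq_of_map_mk_sol_eq (by rw [← map_commutator, hLp]) (hL.map (MulAut.conj k).surjective)
    hLp hL ?_
  rw [← hkL, map_map, map_map]
  congr 1

end Subgroup

/-- Distinct sol-components of a finite group normalize each other and commute
modulo `sol G`. -/
theorem solComponents_normalize_and_commute_mod_sol
    {G : Type*} [Group G] [Finite G] {K L : Subgroup G}
    (hK : K.IsSolComponent) (hL : L.IsSolComponent) (hKL : K ≠ L) :
    K ≤ Subgroup.normalizer (L : Set G) ∧ L ≤ Subgroup.normalizer (K : Set G) ∧ ⁅K, L⁆ ≤ sol G := by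
  obtain ⟨hKp, hKs, hKc⟩ := hK
  obtain ⟨hLp, hLs, hLc⟩ := hL
  have hcomm : ⁅K.map (QuotientGroup.mk' (sol G)), L.map (QuotientGroup.mk' (sol G))⁆ = ⊥ :=
    hKc.commutator_eq_bot hLc fun h =>
      hKL (eq_of_map_mk_sol_eq hKp hKs.isSubnormal hLp hLs.isSubnormal h)
  refine ⟨le_normalizer_of_commutator_map_mk_sol_eq_bot hLp hLs.isSubnormal hcomm,
    le_normalizer_of_commutator_map_mk_sol_eq_bot hKp hKs.isSubnormal
      (by rwa [commutator_comm]), ?_⟩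
  rw [← QuotientGroup.ker_mk' (sol G), ← Subgroup.map_eq_bot_iff, map_commutator, hcomm]
end

section
/- Suppose a finite group A acts coprimely on a finite group G, that G is p-solvable for a prime p, and that A centralizes some Sylow p-subgroup of G. Then [G, A] ≤ O_{p'}(G), the largest normal subgroup of G of order coprime to p. -/
/-- The subgroup of fixed points of the action of `a` on `G`. -/
def fixedSub {A : Type*} (G : Type*) [Group A] [Group G] [MulDistribMulAction A G]
    (a : A) : Subgroup G where
  carrier := {g : G | a • g = g}
  one_mem' := smul_one a
  mul_mem' := by
    intro x y hx hy
    simp only [Set.mem_setOf_eq] at *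
    rw [smul_mul', hx, hy]
  inv_mem' := by
    intro x hx
    simp only [Set.mem_setOf_eq] at *
    rw [smul_inv', hx]

/-- The commutator `[G, A]` of a group `G` with a group `A` acting on it:
the subgroup generated by all `g⁻¹ • (a • g)`. -/
def actCommutator (A G : Type*) [Group A] [Group G] [MulDistribMulAction A G] :
    Subgroup G :=
  Subgroup.closure {x : G | ∃ (g : G) (a : A), x = g⁻¹ * (a • g)}

/-- A finite group `G` is `p`-solvable if it has a subnormal series in which every
factor is a `p`-group or a group of order coprime to `p` (orders of factors are
expressed via relative indices). -/
def IsPSolvable (p : ℕ) (G : Type*) [Group G] : Prop :=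
  ∃ (n : ℕ) (c : Fin (n + 1) → Subgroup G),
    c 0 = ⊥ ∧ c (Fin.last n) = ⊤ ∧
    ∀ i : Fin n,
      c i.castSucc ≤ c i.succ ∧ ((c i.castSucc).subgroupOf (c i.succ)).Normal ∧
        ((∃ k, (c i.castSucc).relIndex (c i.succ) = p ^ k) ∨
          ((c i.castSucc).relIndex (c i.succ)).Coprime p)

/-- The largest normal subgroup of `G` of order coprime to `p`
(as the subgroup generated by all normal subgroups of order coprime to `p`). -/
def pPrimeCore (p : ℕ) (G : Type*) [Group G] : Subgroup G :=
  Subgroup.closure {x : G | ∃ N : Subgroup G, N.Normal ∧ (Nat.card N).Coprime p ∧ x ∈ N}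


/-!
Induction on `|G|`. If `O_{p'}(G) ≠ 1`, apply induction to `G / O_{p'}(G)`: the preimage of
its `p'`-core is again a normal `p'`-subgroup. Otherwise `p`-solvability makes `Q = O_p(G)`
nontrivial. `Q` lies in the Sylow subgroup centralized by `A`, so every `g⁻¹ (a • g)`
centralizes `Q`, and induction applied to `G / Q` puts it in the preimage `M` of
`O_{p'}(G / Q)`. In `C = C_G(Q) ∩ M` the subgroup `Q ∩ C` is a central Sylow `p`-subgroup, so
by Burnside's transfer theorem it has a normal `p`-complement, which lies in `O_{p'}(G) = 1`.
Hence `g⁻¹ (a • g) ∈ Q` is fixed by `A`, and under a coprime action such an element is trivial.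
-/

open Subgroup QuotientGroup

structure DvdMulClosed (π : ℕ → Prop) : Prop where
  one : π 1
  of_dvd {m n : ℕ} : m ∣ n → π n → π m
  mul {m n : ℕ} : π m → π n → π (m * n)

theorem DvdMulClosed.coprime (p : ℕ) : DvdMulClosed (·.Coprime p) :=
  ⟨Nat.coprime_one_left p, fun h hn => hn.coprime_dvd_left h, Nat.Coprime.mul_left⟩

theorem DvdMulClosed.primePow {p : ℕ} (hp : p.Prime) : DvdMulClosed (∃ k, · = p ^ k) where
  one := ⟨0, rfl⟩
  of_dvd h := fun ⟨k, hk⟩ => by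
    obtain ⟨j, -, rfl⟩ := (Nat.dvd_prime_pow hp).mp (hk ▸ h)
    exact ⟨j, rfl⟩
  mul := fun ⟨j, hj⟩ ⟨k, hk⟩ => ⟨j + k, by rw [hj, hk, pow_add]⟩

section PiCore

variable {π : ℕ → Prop} {G H : Type*} [Group G] [Group H]

theorem DvdMulClosed.card_of_map (hπ : DvdMulClosed π) (f : G →* H) {K : Subgroup G}
    (hker : π (Nat.card f.ker)) (hmap : π (Nat.card (K.map f))) : π (Nat.card K) := by
  rw [← (f.ker.subgroupOf K).card_mul_index]
  exact hπ.mul (hπ.of_dvd (card_comap_dvd_of_injective _ _ K.subtype_injective) hker)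
    (by rwa [← relIndex_ker] at hmap)

theorem DvdMulClosed.card_comap_mk' (hπ : DvdMulClosed π) {N : Subgroup G} [N.Normal]
    {S : Subgroup (G ⧸ N)} (hN : π (Nat.card N)) (hS : π (Nat.card S)) :
    π (Nat.card (S.comap (mk' N))) :=
  hπ.card_of_map (mk' N) (by rwa [ker_mk'])
    (by rwa [map_comap_eq_self_of_surjective (mk'_surjective N)])

theorem DvdMulClosed.card_sup (hπ : DvdMulClosed π) {N K : Subgroup G} [K.Normal]
    (hN : π (Nat.card N)) (hK : π (Nat.card K)) : π (Nat.card ↥(N ⊔ K)) := by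
  have := hπ.card_comap_mk' hK (hπ.of_dvd (card_map_dvd N (mk' K)) hN)
  rwa [comap_map_eq, ker_mk'] at this

/-- `O_π(G)`, for `π` a property of group orders. -/
def piCore (π : ℕ → Prop) (G : Type*) [Group G] : Subgroup G :=
  closure {x : G | ∃ N : Subgroup G, N.Normal ∧ π (Nat.card N) ∧ x ∈ N}

theorem le_piCore {N : Subgroup G} [hN : N.Normal] (h : π (Nat.card N)) : N ≤ piCore π G :=
  fun _ hx => subset_closure ⟨N, hN, h, hx⟩

theorem map_piCore_le (e : G ≃* H) : (piCore π G).map e.toMonoidHom ≤ piCore π H := by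
  rw [piCore, MonoidHom.map_closure, closure_le]
  rintro _ ⟨x, ⟨N, hN, hπ, hx⟩, rfl⟩
  have := hN.map e.toMonoidHom e.surjective
  exact le_piCore (N := N.map e.toMonoidHom) (by rwa [card_map_of_injective e.injective])
    (mem_map_of_mem _ hx)

instance piCore_characteristic : (piCore π G).Characteristic :=
  characteristic_iff_map_le.mpr map_piCore_le

theorem piCore_ne_bot_of_mulEquiv (e : G ≃* H) (h : piCore π G ≠ ⊥) : piCore π H ≠ ⊥ :=
  ne_bot_of_le_ne_bot (by rwa [Ne, map_eq_bot_iff_of_injective _ e.injective]) (map_piCore_le e)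

theorem piCore_ne_bot [Nontrivial G] (h : π (Nat.card G)) : piCore π G ≠ ⊥ :=
  ne_bot_of_le_ne_bot top_ne_bot (le_piCore (N := ⊤) (by rwa [card_top]))

variable [Finite G]

theorem card_piCore (hπ : DvdMulClosed π) : π (Nat.card (piCore π G)) := by
  let S := {N : Subgroup G | N.Normal ∧ π (Nat.card N)}
  have hS : SupClosed S := fun N ⟨_, hN⟩ K ⟨_, hK⟩ => ⟨inferInstance, hπ.card_sup hN hK⟩
  have heq : piCore π G = sSup S :=
    le_antisymm ((closure_le _).mpr fun _ ⟨N, hN, hπN, hx⟩ => le_sSup (s := S) ⟨hN, hπN⟩ hx)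
      (sSup_le fun N ⟨_, hN⟩ => le_piCore hN)
  rw [heq]
  exact (hS.sSup_mem (Set.toFinite S) ⟨inferInstance, by rw [card_bot]; exact hπ.one⟩ le_rfl).2

theorem comap_piCore_le (hπ : DvdMulClosed π) (N : Subgroup G) [N.Normal]
    (hN : π (Nat.card N)) : (piCore π (G ⧸ N)).comap (mk' N) ≤ piCore π G :=
  have : ((piCore π (G ⧸ N)).comap (mk' N)).Normal := Normal.comap inferInstance _
  le_piCore (hπ.card_comap_mk' hN (card_piCore hπ))

theorem piCore_eq_bot_of_normal (hπ : DvdMulClosed π) (K : Subgroup G) [K.Normal]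
    (h : piCore π G = ⊥) : piCore π K = ⊥ := by
  have hle : (piCore π K).map K.subtype ≤ piCore π G :=
    le_piCore (by rw [card_map_of_injective K.subtype_injective]; exact card_piCore hπ)
  rwa [h, le_bot_iff, map_eq_bot_iff_of_injective _ K.subtype_injective] at hle

theorem piCore_ne_bot_of_series (hπ : DvdMulClosed π) {n : ℕ} (c : Fin (n + 1) → Subgroup G)
    (hlast : c (Fin.last n) = ⊤)
    (hc : ∀ i : Fin n, c i.castSucc ≤ c i.succ ∧ ((c i.castSucc).subgroupOf (c i.succ)).Normal)
    (i : Fin (n + 1)) (hi : piCore π (c i) ≠ ⊥) : piCore π G ≠ ⊥ := by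
  induction i using Fin.reverseInduction with
  | last => exact piCore_ne_bot_of_mulEquiv ((MulEquiv.subgroupCongr hlast).trans topEquiv) hi
  | cast i ih =>
    obtain ⟨hle, _⟩ := hc i
    exact ih (mt (piCore_eq_bot_of_normal hπ _)
      (piCore_ne_bot_of_mulEquiv (subgroupOfEquivOfLe hle).symm hi))

end PiCore

section Cores

variable {p : ℕ} {G : Type*} [Group G]

theorem pPrimeCore_eq_piCore : pPrimeCore p G = piCore (·.Coprime p) G := rfl

instance : (pPrimeCore p G).Characteristic := piCore_characteristic (π := (·.Coprime p))

variable [Fact p.Prime] [Finite G]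

theorem pCore_eq_piCore : pCore p G = piCore (∃ k, · = p ^ k) G := by
  simp only [pCore, piCore, IsPGroup.iff_card]

instance : (pCore p G).Characteristic := by rw [pCore_eq_piCore]; infer_instance

theorem isPGroup_pCore : IsPGroup p (pCore p G) := by
  rw [pCore_eq_piCore]
  exact IsPGroup.of_card (card_piCore (.primePow Fact.out)).choose_spec

theorem pCore_le_sylow (P : Sylow p G) : pCore p G ≤ P :=
  isPGroup_pCore.le_sylow_of_normal P

end Cores

section PSolvable

variable {p : ℕ} {G : Type*} [Group G]

theorem IsPSolvable.quotient (hp : p.Prime) (h : IsPSolvable p G) (N : Subgroup G) [N.Normal] :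
    IsPSolvable p (G ⧸ N) := by
  obtain ⟨n, c, h0, hlast, hc⟩ := h
  refine ⟨n, fun i => (c i).map (mk' N), by simp [h0],
    by simp [hlast, map_top_of_surjective _ (mk'_surjective N)], fun i => ?_⟩
  obtain ⟨hle, hnormal, hindex⟩ := hc i
  refine ⟨map_mono hle, ?_, ?_⟩
  · rw [normal_subgroupOf_iff_le_normalizer (map_mono hle)]
    exact (map_mono ((normal_subgroupOf_iff_le_normalizer hle).mp hnormal)).trans
      (le_normalizer_map _)
  · have hdvd : ((c i.castSucc).map (mk' N)).relIndex ((c i.succ).map (mk' N)) ∣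
        (c i.castSucc).relIndex (c i.succ) := by
      rw [← relIndex_comap, comap_map_eq, ker_mk']
      exact relIndex_dvd_of_le_left _ le_sup_left
    exact hindex.imp ((DvdMulClosed.primePow hp).of_dvd hdvd)
      ((DvdMulClosed.coprime p).of_dvd hdvd)

theorem IsPSolvable.pCore_ne_bot_or_pPrimeCore_ne_bot [Fact p.Prime] [Finite G] [Nontrivial G]
    (h : IsPSolvable p G) : pCore p G ≠ ⊥ ∨ pPrimeCore p G ≠ ⊥ := by
  obtain ⟨n, c, h0, hlast, hc⟩ := h
  obtain ⟨i, hbot, hne⟩ : ∃ i : Fin n, c i.castSucc = ⊥ ∧ c i.succ ≠ ⊥ := by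
    by_contra! hall
    have : ∀ j, c j = ⊥ := fun j => by
      induction j using Fin.induction with
      | zero => exact h0
      | succ j ih => exact hall j ih
    exact top_ne_bot (hlast ▸ this (Fin.last n))
  have : Nontrivial (c i.succ) := (nontrivial_iff_ne_bot _).mpr hne
  have hseries := fun j => (⟨(hc j).1, (hc j).2.1⟩ :
    c j.castSucc ≤ c j.succ ∧ ((c j.castSucc).subgroupOf (c j.succ)).Normal)
  have hcard := (hc i).2.2
  rw [hbot, relIndex_bot_left] at hcard
  rw [pCore_eq_piCore, pPrimeCore_eq_piCore]
  exact hcard.imp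
    (fun h => piCore_ne_bot_of_series (.primePow Fact.out) c hlast hseries _ (piCore_ne_bot h))
    (fun h => piCore_ne_bot_of_series (.coprime p) c hlast hseries _ (piCore_ne_bot h))

end PSolvable

section Action

variable {A G : Type*} [Group A] [Group G] [MulDistribMulAction A G]

def MulAut.quotient (N : Subgroup G) [N.Characteristic] : MulAut G →* MulAut (G ⧸ N) where
  toFun e := QuotientGroup.congr N N e (characteristic_iff_map_eq.mp ‹_› e)
  map_one' := MulEquiv.ext fun x => QuotientGroup.induction_on x fun _ => rfl
  map_mul' _ _ := MulEquiv.ext fun x => QuotientGroup.induction_on x fun _ => rfl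

instance (N : Subgroup G) [N.Characteristic] : MulDistribMulAction A (G ⧸ N) :=
  .compHom _ ((MulAut.quotient N).comp (MulDistribMulAction.toMulAut A G))

theorem actCommutator_le_iff {H : Subgroup G} :
    actCommutator A G ≤ H ↔ ∀ (g : G) (a : A), g⁻¹ * a • g ∈ H := by
  rw [actCommutator, closure_le]
  exact ⟨fun h g a => h ⟨g, a, rfl⟩, by rintro h _ ⟨g, a, rfl⟩; exact h g a⟩

theorem actCommutator_le_comap (N : Subgroup G) [N.Characteristic] :
    actCommutator A G ≤ (actCommutator A (G ⧸ N)).comap (mk' N) :=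
  actCommutator_le_iff.mpr fun g a => subset_closure ⟨g, a, rfl⟩

theorem actCommutator_le_centralizer {Q : Subgroup G} [Q.Normal]
    (hQ : ∀ a : A, ∀ x ∈ Q, a • x = x) : actCommutator A G ≤ centralizer (Q : Set G) := by
  refine actCommutator_le_iff.mpr fun g a => mem_centralizer_iff.mpr fun x hx => ?_
  have hconj : (a • g) * x * (a • g)⁻¹ = g * x * g⁻¹ := by
    rw [← hQ a x hx, ← smul_inv', ← smul_mul', ← smul_mul', hQ a x hx,
      hQ a _ (Normal.conj_mem ‹_› x hx g)]
  calc x * (g⁻¹ * a • g) = g⁻¹ * (g * x * g⁻¹) * a • g := by group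
    _ = g⁻¹ * a • g * x := by rw [← hconj]; group

/-- With `c = g⁻¹ (a • g)` fixed by `a` one gets `a ^ k • g = g * c ^ k`, so the order of `c`
divides both `|A|` and `|G|`. -/
theorem inv_mul_smul_eq_one_of_smul_eq [Finite A] [Finite G]
    (hcop : (Nat.card A).Coprime (Nat.card G)) {g : G} {a : A}
    (hfix : a • (g⁻¹ * a • g) = g⁻¹ * a • g) : g⁻¹ * a • g = 1 := by
  set c := g⁻¹ * a • g
  have hag : a • g = g * c := (mul_inv_cancel_left g _).symm
  have hpow (k : ℕ) : a ^ k • g = g * c ^ k := by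
    induction k with
    | zero => simp
    | succ k ih => rw [pow_succ', mul_smul, ih, smul_mul', smul_pow', hfix, hag, mul_assoc,
        ← pow_succ']
  refine (pow_eq_one_iff_of_coprime hcop).mp ⟨?_, pow_card_eq_one'⟩
  simpa [pow_card_eq_one'] using (hpow (Nat.card A)).symm

end Action

section Centralizer

variable {p : ℕ} [Fact p.Prime] {G : Type*} [Group G] [Finite G]

/-- Burnside's transfer theorem gives a central Sylow subgroup a normal `p`-complement. -/
theorem Sylow.eq_top_of_le_center (P : Sylow p G) (hP : (P : Subgroup G) ≤ center G)
    (h : pPrimeCore p G = ⊥) : (P : Subgroup G) = ⊤ := by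
  have hN : normalizer P ≤ centralizer (P : Set G) := fun x _ =>
    mem_centralizer_iff.mpr fun y hy => (mem_center_iff.mp (hP hy) x).symm
  have hK : (MonoidHom.transferSylow P hN).ker ≤ pPrimeCore p G :=
    le_piCore (π := (·.Coprime p)) (Nat.Coprime.symm <| (Nat.Prime.coprime_iff_not_dvd Fact.out).mpr
      (MonoidHom.not_dvd_card_ker_transferSylow P hN))
  rw [h, le_bot_iff] at hK
  exact isComplement'_bot_left.mp (hK ▸ MonoidHom.ker_transferSylow_isComplement' P hN)

theorem centralizer_inf_comap_le {Q : Subgroup G} [Q.Normal] (hQ : IsPGroup p Q)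
    {S : Subgroup (G ⧸ Q)} [S.Normal] (hS : (Nat.card S).Coprime p) (h : pPrimeCore p G = ⊥) :
    centralizer (Q : Set G) ⊓ S.comap (mk' Q) ≤ Q := by
  set C := centralizer (Q : Set G) ⊓ S.comap (mk' Q)
  have : (S.comap (mk' Q)).Normal := Normal.comap inferInstance _
  have hindex : ¬ p ∣ (Q.subgroupOf C).index := by
    have hdvd : (Q.subgroupOf C).index ∣ Nat.card S := by
      have hrel := relIndex_ker (mk' Q) (K := C)
      rw [ker_mk'] at hrel
      rw [← relIndex, hrel]
      exact card_dvd_of_le (map_le_iff_le_comap.mpr inf_le_right)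
    exact fun hp => (Nat.Prime.coprime_iff_not_dvd Fact.out).mp hS.symm (hp.trans hdvd)
  have hcenter : Q.subgroupOf C ≤ center C := fun x hx => mem_center_iff.mpr fun y =>
    Subtype.ext (mem_centralizer_iff.mp ((inf_le_left : C ≤ _) y.2) x hx).symm
  have htop := Sylow.eq_top_of_le_center (hQ.comap_subtype.toSylow hindex) hcenter
    (by rw [pPrimeCore_eq_piCore] at h ⊢; exact piCore_eq_bot_of_normal (.coprime p) C h)
  exact subgroupOf_eq_top.mp htop

end Centralizer

structure CoprimeSylowCentralizing (p : ℕ) (A G : Type*) [Group A] [Group G]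
    [MulDistribMulAction A G] : Prop where
  coprime : (Nat.card A).Coprime (Nat.card G)
  isPSolvable : IsPSolvable p G
  exists_sylow : ∃ P : Sylow p G, ∀ a : A, ∀ x ∈ (P : Subgroup G), a • x = x

namespace CoprimeSylowCentralizing

variable {p : ℕ} [Fact p.Prime] {A G : Type*} [Group A] [Group G] [MulDistribMulAction A G]
  [Finite G]

theorem quotient (h : CoprimeSylowCentralizing p A G) (N : Subgroup G) [N.Characteristic] :
    CoprimeSylowCentralizing p A (G ⧸ N) where
  coprime := h.coprime.coprime_dvd_right (card_dvd_of_surjective _ (mk'_surjective N))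
  isPSolvable := h.isPSolvable.quotient Fact.out N
  exists_sylow := by
    obtain ⟨P, hP⟩ := h.exists_sylow
    refine ⟨P.mapSurjective (mk'_surjective N), fun a => ?_⟩
    rintro _ ⟨x, hx, rfl⟩
    exact congrArg _ (hP a x hx)

theorem actCommutator_le_pPrimeCore [Finite A] (h : CoprimeSylowCentralizing p A G) :
    actCommutator A G ≤ pPrimeCore p G := by
  induction hn : Nat.card G using Nat.strong_induction_on generalizing G with
  | _ n ih =>
  have ih_quotient (N : Subgroup G) [N.Characteristic] (hN : N ≠ ⊥) :
      actCommutator A (G ⧸ N) ≤ pPrimeCore p (G ⧸ N) := by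
    refine ih _ ?_ (h.quotient N) rfl
    rw [← hn, ← N.index_mul_card]
    exact lt_mul_of_one_lt_right (Nat.pos_of_ne_zero index_ne_zero_of_finite)
      ((one_lt_card_iff_ne_bot N).mpr hN)
  by_cases hcore : pPrimeCore p G = ⊥
  · obtain ⟨P, hP⟩ := h.exists_sylow
    rcases subsingleton_or_nontrivial G with hG | hG
    · exact (Subsingleton.elim _ ⊥ : actCommutator A G = ⊥) ▸ bot_le
    have hQ : pCore p G ≠ ⊥ :=
      h.isPSolvable.pCore_ne_bot_or_pPrimeCore_ne_bot.resolve_right (· hcore)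
    have hfix (a : A) (x : G) (hx : x ∈ pCore p G) : a • x = x := hP a x (pCore_le_sylow P hx)
    have hle : actCommutator A G ≤ pCore p G :=
      calc actCommutator A G
          ≤ centralizer (pCore p G : Set G) ⊓ (pPrimeCore p (G ⧸ pCore p G)).comap (mk' _) :=
            le_inf (actCommutator_le_centralizer hfix)
              ((actCommutator_le_comap _).trans (comap_mono (ih_quotient _ hQ)))
        _ ≤ pCore p G := centralizer_inf_comap_le isPGroup_pCore (card_piCore (.coprime p)) hcore
    refine actCommutator_le_iff.mpr fun g a => ?_
    rw [inv_mul_smul_eq_one_of_smul_eq h.coprime (hfix a _ (actCommutator_le_iff.mp hle g a))]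
    exact one_mem _
  · calc actCommutator A G
        ≤ (pPrimeCore p (G ⧸ pPrimeCore p G)).comap (mk' _) :=
          (actCommutator_le_comap _).trans (comap_mono (ih_quotient _ hcore))
      _ ≤ pPrimeCore p G := comap_piCore_le (.coprime p) _ (card_piCore (.coprime p))

end CoprimeSylowCentralizing

theorem actCommutator_le_pPrimeCore_of_centralizes_sylow_general
    {A G : Type*} [Group A] [Group G] [Finite A] [Finite G] [MulDistribMulAction A G]
    (p : ℕ) (hp : p.Prime)
    (hcop : (Nat.card A).Coprime (Nat.card G))
    (hpsol : IsPSolvable p G)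
    (hcent : ∃ P : Sylow p G, ∀ (a : A), ∀ x ∈ (P : Subgroup G), a • x = x) :
    actCommutator A G ≤ pPrimeCore p G :=
  have : Fact p.Prime := ⟨hp⟩
  CoprimeSylowCentralizing.actCommutator_le_pPrimeCore ⟨hcop, hpsol, hcent⟩

/-- If a finite group `A` acts coprimely on a finite `p`-solvable group `G` and `A`
centralizes some Sylow `p`-subgroup of `G`, then `[G, A] ≤ O_{p'}(G)`. -/
theorem actCommutator_le_pPrimeCore_of_centralizes_sylow
    {A G : Type*} [Group A] [Group G] [Finite A] [Finite G] [MulDistribMulAction A G]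
    (p : ℕ) (hp : p.Prime)
    (hcop : (Nat.card A).Coprime (Nat.card G))
    (hsol : IsSolvable A ∨ IsSolvable G)
    (hpsol : IsPSolvable p G)
    (hcent : ∃ P : Sylow p G, ∀ (a : A), ∀ x ∈ (P : Subgroup G), a • x = x) :
    actCommutator A G ≤ pPrimeCore p G :=
  actCommutator_le_pPrimeCore_of_centralizes_sylow_general p hp hcop hpsol hcent
end
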